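/- arXiv:0910.5652 — 6 statements merged into one kernel-verified Lean document; each statement's English description precedes it below -/
import Mathlib

section
/- Let A₀ = {G_i, G_e, ψ_e} be a fixed reference amalgam over the directed graph Γ⃗ and let (C₀, Γ⃗) be its reference graph of groups. The correspondence sending an amalgam A = {G_i, G_e, φ_e} of type A₀ to the pointing ((C₀, Γ⃗), δ^A) with δ^A_e = φ_e⁻¹ ∘ ψ_e, and sending a pointing ((C₀, Γ⃗), δ) to the amalgam with inclusion maps φ_e = ψ_e ∘ δ_e⁻¹, yields a bijection between isomorphism classes of amalgams of type A₀ and isomorphism classes of pointings of (C₀, Γ⃗). -/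
open Function

/-! A graph `Γ = (I, E)` (multiple edges and loops allowed) is encoded by its set `I`
of vertices, its set `E` of geometric edges and a map `d0` assigning to each *directed*
edge (a geometric edge together with an orientation bit) its initial vertex.  The set
`Dir E = E × Bool` of directed edges carries the fixed-point-free involution
`Dir.bar`, and `d1 d = d0 d.bar`.  Data indexed by geometric edges automatically
satisfies the compatibility `X_e = X_ē`. -/

/-- The directed edges over a set `E` of geometric edges. -/
abbrev Dir (E : Type) : Type := E × Bool

/-- The orientation-reversal involution `e ↦ ē` (it is fixed-point free). -/
def Dir.bar {E : Type} (d : Dir E) : Dir E := (d.1, !d.2)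

section GoG

variable {I E : Type} (d0 : Dir E → I) (Av : I → Type) [∀ i, Group (Av i)]
  (Ae : E → Type) [∀ e, Group (Ae e)]

/-- The edge maps of the pointing of a graph of groups `{A_i, A_e, α_e}` by a
collection `δ = {δ_e ∈ A_{d0 e}}`:  `α'_e = ad(δ_e⁻¹) ∘ α_e`, where
`ad(x)(y) = x⁻¹ * y * x`. -/
def pointedMap (α : ∀ d : Dir E, Ae d.1 →* Av (d0 d)) (δ : ∀ d : Dir E, Av (d0 d))
    (d : Dir E) : Ae d.1 →* Av (d0 d) :=
  (MulAut.conj (δ d)).toMonoidHom.comp (α d)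

/-- The collection `{a_i ∈ A_i, a_e ∈ A_e}` (the condition `a_e = a_ē` is automatic
since `a_e` is indexed by geometric edges) induces an isomorphism of pointings
`δ¹ → δ²` of the graph of groups with edge maps `α`:
`δ¹_e * α_e(a_e) = a_{d0 e} * δ²_e` for all directed edges `e`. -/
def InducesPointingIso (α : ∀ d : Dir E, Ae d.1 →* Av (d0 d))
    (δ₁ δ₂ : ∀ d : Dir E, Av (d0 d)) (av : ∀ i, Av i) (ae : ∀ e, Ae e) : Prop :=
  ∀ d : Dir E, δ₁ d * α d (ae d.1) = av (d0 d) * δ₂ d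

/-- Two pointings of the graph of groups with edge maps `α` are isomorphic. -/
def PointingIso (α : ∀ d : Dir E, Ae d.1 →* Av (d0 d))
    (δ₁ δ₂ : ∀ d : Dir E, Av (d0 d)) : Prop :=
  ∃ av ae, InducesPointingIso d0 Av Ae α δ₁ δ₂ av ae

end GoG
section Pullback

variable {G H : Type} [Group G] [Group H]

/-- The automorphism `φ⁻¹ ∘ ψ` of `G` determined by two injective homomorphisms
`φ ψ : G → H` with the same range. -/
noncomputable def pullbackAut (φ ψ : G →* H) (hφ : Injective ⇑φ) (hψ : Injective ⇑ψ)
    (h : Set.range ⇑φ = Set.range ⇑ψ) : G ≃* G :=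
  (MonoidHom.ofInjective hψ).trans
    ((MulEquiv.subgroupCongr (SetLike.ext' (by
        rw [MonoidHom.coe_range, MonoidHom.coe_range, h]) : ψ.range = φ.range)).trans
      (MonoidHom.ofInjective hφ).symm)

lemma pullbackAut_spec (φ ψ : G →* H) (hφ : Injective ⇑φ) (hψ : Injective ⇑ψ)
    (h : Set.range ⇑φ = Set.range ⇑ψ) (x : G) :
    φ (pullbackAut φ ψ hφ hψ h x) = ψ x := by
  show φ ((MonoidHom.ofInjective hφ).symm _) = ψ x
  rw [MonoidHom.apply_ofInjective_symm]
  show ((MonoidHom.ofInjective hψ) x : H) = ψ x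
  rw [MonoidHom.ofInjective_apply]

/-- The subgroup of `Aut(H)` of all automorphisms stabilizing the image of `ψ : G → H`. -/
def stabSubgroup (ψ : G →* H) : Subgroup (MulAut H) where
  carrier := {f | f '' Set.range ⇑ψ = Set.range ⇑ψ}
  one_mem' := by simp
  mul_mem' := by
    intro f g hf hg
    have h : ⇑(f * g) = ⇑f ∘ ⇑g := rfl
    simp only [Set.mem_setOf_eq] at *
    rw [h, Set.image_comp, hg, hf]
  inv_mem' := by
    intro f hf
    simp only [Set.mem_setOf_eq] at *
    have h : ⇑f⁻¹ ∘ ⇑f = id := by funext x; exact f.left_inv x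
    calc ⇑f⁻¹ '' Set.range ⇑ψ = ⇑f⁻¹ '' (⇑f '' Set.range ⇑ψ) := by rw [hf]
      _ = (⇑f⁻¹ ∘ ⇑f) '' Set.range ⇑ψ := by rw [Set.image_comp]
      _ = Set.range ⇑ψ := by rw [h, Set.image_id]

/-- The automorphism `ψ⁻¹ ∘ f ∘ ψ` of `G`, for `f` an automorphism of `H`
stabilizing the image of `ψ`. -/
noncomputable def stabAutFun (ψ : G →* H) (hψ : Injective ⇑ψ) (f : stabSubgroup ψ) :
    G ≃* G :=
  pullbackAut ψ ((f : MulAut H).toMonoidHom.comp ψ) hψ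
    ((f : MulAut H).injective.comp hψ)
    (by rw [MonoidHom.coe_comp, Set.range_comp]; exact f.2.symm)

lemma stabAutFun_spec (ψ : G →* H) (hψ : Injective ⇑ψ) (f : stabSubgroup ψ) (x : G) :
    ψ (stabAutFun ψ hψ f x) = (f : MulAut H) (ψ x) :=
  pullbackAut_spec _ _ _ _ _ x

/-- The homomorphism `α = ad(ψ) : Aut_H(im ψ) → Aut(G)`, `f ↦ ψ⁻¹ ∘ f ∘ ψ`. -/
noncomputable def stabToAut (ψ : G →* H) (hψ : Injective ⇑ψ) :
    stabSubgroup ψ →* MulAut G where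
  toFun := stabAutFun ψ hψ
  map_one' := MulEquiv.ext fun x => hψ (by rw [stabAutFun_spec]; rfl)
  map_mul' f g := MulEquiv.ext fun x => hψ (by
    rw [stabAutFun_spec]
    have h : ((f * g : stabSubgroup ψ) : MulAut H) (ψ x)
        = (f : MulAut H) ((g : MulAut H) (ψ x)) := rfl
    rw [h, ← stabAutFun_spec ψ hψ g, ← stabAutFun_spec ψ hψ f]
    rfl)

end Pullback

section Amalgam

variable {I E : Type} (d0 : Dir E → I) (Gv : I → Type) (Ge : E → Type)
  [∀ i, Group (Gv i)] [∀ e, Group (Ge e)]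

/-- An amalgam over the graph encoded by `d0 : Dir E → I`, with vertex groups `Gv`
and edge groups `Ge` (automatically satisfying `G_e = G_ē`): a collection of
injective inclusion maps `φ_e : G_{d0 e} → G_e`. -/
structure Amalgam : Type where
  φ : ∀ d : Dir E, Gv (d0 d) →* Ge d.1
  inj : ∀ d : Dir E, Injective ⇑(φ d)

variable {d0 Gv Ge}

/-- `A` has type `A₀`: same groups, and the inclusion maps have the same images. -/
def Amalgam.SameType (A A₀ : Amalgam d0 Gv Ge) : Prop :=
  ∀ d : Dir E, Set.range ⇑(A.φ d) = Set.range ⇑(A₀.φ d)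

/-- Isomorphism of two amalgams with the same groups: a collection of automorphisms
`χ_i` of `G_i` and `χ_e = χ_ē` of `G_e` with `χ_e ∘ φ_e = φ'_e ∘ χ_{d0 e}`. -/
def Amalgam.Iso (A A' : Amalgam d0 Gv Ge) : Prop :=
  ∃ (χv : ∀ i, MulAut (Gv i)) (χe : ∀ e, MulAut (Ge e)),
    ∀ (d : Dir E) (x : Gv (d0 d)), χe d.1 (A.φ d x) = A'.φ d (χv (d0 d) x)

/-- The edge group `A_e = Aut_{G_e}(Ḡ_{d0 e}, Ḡ_{d1 e})` of the reference graph of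
groups: automorphisms of `G_e` stabilizing the images of both inclusion maps. -/
def edgeSub (A₀ : Amalgam d0 Gv Ge) (e : E) : Subgroup (MulAut (Ge e)) :=
  stabSubgroup (A₀.φ (e, false)) ⊓ stabSubgroup (A₀.φ (e, true))

lemma edgeSub_le (A₀ : Amalgam d0 Gv Ge) (d : Dir E) :
    edgeSub A₀ d.1 ≤ stabSubgroup (A₀.φ d) := by
  obtain ⟨e, b⟩ := d
  cases b
  · exact inf_le_left
  · exact inf_le_right

/-- The edge maps `α_e = ad(ψ_e) : A_e → Aut(G_{d0 e})` of the reference graph of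
groups of the reference amalgam `A₀`. -/
noncomputable def refα (A₀ : Amalgam d0 Gv Ge) (d : Dir E) :
    edgeSub A₀ d.1 →* MulAut (Gv (d0 d)) :=
  (stabToAut (A₀.φ d) (A₀.inj d)).comp (Subgroup.inclusion (edgeSub_le A₀ d))

/-- The element `δ^A_e = φ_e⁻¹ ∘ ψ_e ∈ Aut(G_{d0 e})` of the pointing associated to an
amalgam `A` of type `A₀`. -/
noncomputable def deltaOf (A A₀ : Amalgam d0 Gv Ge) (h : A.SameType A₀) (d : Dir E) :
    MulAut (Gv (d0 d)) :=
  pullbackAut (A.φ d) (A₀.φ d) (A.inj d) (A₀.inj d) (h d)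

/-- The amalgam associated to a pointing `δ` of the reference graph of groups of `A₀`:
its inclusion maps are `φ_e = ψ_e ∘ δ_e⁻¹`. -/
def amalgamOf (A₀ : Amalgam d0 Gv Ge) (δ : ∀ d : Dir E, MulAut (Gv (d0 d))) :
    Amalgam d0 Gv Ge where
  φ d := (A₀.φ d).comp ((δ d)⁻¹ : MulAut (Gv (d0 d))).toMonoidHom
  inj d := (A₀.inj d).comp (MulEquiv.injective _)

lemma amalgamOf_sameType (A₀ : Amalgam d0 Gv Ge) (δ : ∀ d : Dir E, MulAut (Gv (d0 d))) :
    (amalgamOf A₀ δ).SameType A₀ := by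
  intro d
  show Set.range ⇑((A₀.φ d).comp ((δ d)⁻¹ : MulAut (Gv (d0 d))).toMonoidHom) = _
  rw [MonoidHom.coe_comp, Surjective.range_comp]
  exact MulEquiv.surjective _

end Amalgam

/-! Write `δ = φ⁻¹ ψ` and `δ' = φ'⁻¹ ψ` for amalgams `A`, `A'` of type `A₀`.  Applying
the injective map `φ_e` to the pointing condition `δ_e · α_e(a_e) = a_{d0 e} · δ'_e` turns
it into `a_e ∘ φ'_e = φ_e ∘ a_{d0 e}`, so an isomorphism of pointings `δ → δ'` is the same
thing as an isomorphism of amalgams `A' → A` whose edge components stabilize both images;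
and every isomorphism between amalgams of type `A₀` stabilizes them.  Finally
`amalgamOf` is a right inverse of `deltaOf`, which gives surjectivity. -/

lemma pointingIso_equivalence {I E : Type} {d0 : Dir E → I}
    {Av : I → Type} [∀ i, Group (Av i)] {Ae : E → Type} [∀ e, Group (Ae e)]
    (α : ∀ d : Dir E, Ae d.1 →* Av (d0 d)) :
    Equivalence (PointingIso d0 Av Ae α) where
  refl _ := ⟨fun _ => 1, fun _ => 1, fun d => by simp⟩
  symm := by
    rintro δ₁ δ₂ ⟨av, ae, h⟩
    refine ⟨fun i => (av i)⁻¹, fun e => (ae e)⁻¹, fun d => ?_⟩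
    rw [map_inv, mul_inv_eq_iff_eq_mul, mul_assoc, h d, inv_mul_cancel_left]
  trans := by
    rintro δ₁ δ₂ δ₃ ⟨av, ae, h⟩ ⟨bv, be, h'⟩
    refine ⟨fun i => av i * bv i, fun e => ae e * be e, fun d => ?_⟩
    rw [map_mul, ← mul_assoc, h d, mul_assoc, h' d, ← mul_assoc]

lemma mem_stabSubgroup_of_comp_eq {G H : Type} [Group G] [Group H] {φ φ' ψ : G →* H}
    (hφ : Set.range ⇑φ = Set.range ⇑ψ) (hφ' : Set.range ⇑φ' = Set.range ⇑ψ)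
    (f : MulAut H) (χ : MulAut G) (h : ∀ x, f (φ x) = φ' (χ x)) :
    f ∈ stabSubgroup ψ := by
  change f '' Set.range ψ = Set.range ψ
  rw [← hφ, ← Set.range_comp, show f ∘ φ = φ' ∘ χ from funext h,
    χ.surjective.range_comp, hφ', hφ]

namespace Amalgam

variable {I E : Type} {d0 : Dir E → I} {Gv : I → Type} {Ge : E → Type}
  [∀ i, Group (Gv i)] [∀ e, Group (Ge e)]

lemma φ_refα (A₀ : Amalgam d0 Gv Ge) (d : Dir E) (f : edgeSub A₀ d.1) (x : Gv (d0 d)) :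
    A₀.φ d (refα A₀ d f x) = (f : MulAut (Ge d.1)) (A₀.φ d x) :=
  stabAutFun_spec _ _ _ x

lemma φ_deltaOf {A A₀ : Amalgam d0 Gv Ge} (h : A.SameType A₀) (d : Dir E) (x : Gv (d0 d)) :
    A.φ d (deltaOf A A₀ h d x) = A₀.φ d x :=
  pullbackAut_spec _ _ _ _ _ x

lemma deltaOf_amalgamOf (A₀ : Amalgam d0 Gv Ge) (δ : ∀ d : Dir E, MulAut (Gv (d0 d))) :
    deltaOf (amalgamOf A₀ δ) A₀ (amalgamOf_sameType A₀ δ) = δ := by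
  funext d
  ext x
  apply (amalgamOf A₀ δ).inj d
  rw [φ_deltaOf]
  change A₀.φ d x = A₀.φ d ((δ d)⁻¹ (δ d x))
  rw [MulAut.inv_apply_self]

lemma mem_edgeSub_of_iso {A₀ A A' : Amalgam d0 Gv Ge} (hA : A.SameType A₀)
    (hA' : A'.SameType A₀) {χv : ∀ i, MulAut (Gv i)} {χe : ∀ e, MulAut (Ge e)}
    (h : ∀ (d : Dir E) (x : Gv (d0 d)), χe d.1 (A.φ d x) = A'.φ d (χv (d0 d) x)) (e : E) :
    χe e ∈ edgeSub A₀ e :=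
  ⟨mem_stabSubgroup_of_comp_eq (hA _) (hA' _) _ _ (h (e, false)),
    mem_stabSubgroup_of_comp_eq (hA _) (hA' _) _ _ (h (e, true))⟩

lemma deltaOf_mul_refα_eq_iff {A₀ A A' : Amalgam d0 Gv Ge} (hA : A.SameType A₀)
    (hA' : A'.SameType A₀) (d : Dir E) (a : edgeSub A₀ d.1) (b : MulAut (Gv (d0 d))) :
    deltaOf A A₀ hA d * refα A₀ d a = b * deltaOf A' A₀ hA' d ↔
      ∀ x, (a : MulAut (Ge d.1)) (A'.φ d x) = A.φ d (b x) := by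
  calc _ ↔ ∀ y, A.φ d (deltaOf A A₀ hA d (refα A₀ d a y))
          = A.φ d (b (deltaOf A' A₀ hA' d y)) :=
        MulEquiv.ext_iff.trans (forall_congr' fun _ => (A.inj d).eq_iff.symm)
    _ ↔ ∀ y, (a : MulAut (Ge d.1)) (A'.φ d (deltaOf A' A₀ hA' d y))
          = A.φ d (b (deltaOf A' A₀ hA' d y)) := by
        simp only [φ_deltaOf, φ_refα]
    _ ↔ _ := ((deltaOf A' A₀ hA' d).surjective.forall
          (p := fun x => (a : MulAut (Ge d.1)) (A'.φ d x) = A.φ d (b x))).symm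

theorem iso_iff_pointingIso {A₀ : Amalgam d0 Gv Ge}
    (A A' : {A : Amalgam d0 Gv Ge // A.SameType A₀}) :
    A'.1.Iso A.1 ↔ PointingIso d0 (fun i => MulAut (Gv i)) (fun e => ↥(edgeSub A₀ e))
      (refα A₀) (deltaOf A.1 A₀ A.2) (deltaOf A'.1 A₀ A'.2) := by
  constructor
  · rintro ⟨χv, χe, h⟩
    exact ⟨χv, fun e => ⟨χe e, mem_edgeSub_of_iso A'.2 A.2 h e⟩,
      fun d => (deltaOf_mul_refα_eq_iff A.2 A'.2 d _ _).2 (h d)⟩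
  · rintro ⟨av, ae, h⟩
    exact ⟨av, fun e => ae e, fun d => (deltaOf_mul_refα_eq_iff A.2 A'.2 d _ _).1 (h d)⟩

end Amalgam

/-- Let `A₀` be a fixed reference amalgam over the graph `Γ⃗` and
`(C₀, Γ⃗)` its reference graph of groups (vertex groups `Aut(G_i)`, edge groups
`Aut_{G_e}(Ḡ_{d0 e}, Ḡ_{d1 e})`, edge maps `ad(ψ_e)`).  The correspondence sending an
amalgam `A` of type `A₀` to the pointing `δ^A` with `δ^A_e = φ_e⁻¹ ∘ ψ_e`, and sending
a pointing `δ` to the amalgam with inclusion maps `φ_e = ψ_e ∘ δ_e⁻¹`, yields a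
bijection between isomorphism classes of amalgams of type `A₀` and isomorphism classes
of pointings of `(C₀, Γ⃗)`. -/
theorem amalgam_pointing_correspondence
    {I E : Type} {d0 : Dir E → I} {Gv : I → Type} {Ge : E → Type}
    [∀ i, Group (Gv i)] [∀ e, Group (Ge e)] (A₀ : Amalgam d0 Gv Ge) :
    ∃ F : Quot (fun A A' : {A : Amalgam d0 Gv Ge // A.SameType A₀} => A.1.Iso A'.1) →
        Quot (PointingIso d0 (fun i => MulAut (Gv i)) (fun e => ↥(edgeSub A₀ e))
          (refα A₀)),
      Function.Bijective F ∧
      (∀ A : {A : Amalgam d0 Gv Ge // A.SameType A₀},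
        F (Quot.mk _ A) = Quot.mk _ (deltaOf A.1 A₀ A.2)) ∧
      (∀ δ : ∀ d : Dir E, MulAut (Gv (d0 d)),
        F (Quot.mk _ ⟨amalgamOf A₀ δ, amalgamOf_sameType A₀ δ⟩) = Quot.mk _ δ) := by
  have hequiv := pointingIso_equivalence (d0 := d0) (Av := fun i => MulAut (Gv i))
    (Ae := fun e => ↥(edgeSub A₀ e)) (refα A₀)
  refine ⟨Quot.lift (fun A => Quot.mk _ (deltaOf A.1 A₀ A.2))
    (fun A A' h => Quot.sound (hequiv.symm ((Amalgam.iso_iff_pointingIso A' A).1 h))),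
    ⟨?_, ?_⟩, fun A => rfl,
    fun δ => congrArg (Quot.mk _) (Amalgam.deltaOf_amalgamOf A₀ δ)⟩
  · rintro ⟨A⟩ ⟨A'⟩ h
    have hδ := hequiv.eqvGen_iff.1 (Quot.eqvGen_exact h)
    exact Quot.sound ((Amalgam.iso_iff_pointingIso A' A).2 (hequiv.symm hδ))
  · rintro ⟨δ⟩
    exact ⟨Quot.mk _ ⟨amalgamOf A₀ δ, amalgamOf_sameType A₀ δ⟩,
      congrArg (Quot.mk _) (Amalgam.deltaOf_amalgamOf A₀ δ)⟩
end

section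
/- (Goldschmidt's Lemma) Let A₀ be the rank-two amalgam P₁ ←ψ₁− B −ψ₂→ P₂, where ψ₁, ψ₂ are injective group homomorphisms. Let A_i ≤ Aut(P_i) be the subgroup of automorphisms of P_i leaving im ψ_i invariant, let α_i : A_i → Aut(B) be given by f ↦ ψ_i⁻¹ ∘ f ∘ ψ_i, and set Ā_i = im α_i ≤ Aut(B). Then there is a one-to-one correspondence between isomorphism classes of amalgams of type A₀ and (Ā₁, Ā₂)-double cosets in Aut(B). -/
open Function

/-!
An amalgam `(φ₁, φ₂)` of type `A₀` is recorded by `δᵢ = ψᵢ⁻¹ ∘ φᵢ ∈ Aut(B)`. A triple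
`(χ_B, χ₁, χ₂)` is an isomorphism `(φ₁, φ₂) ≅ (φ'₁, φ'₂)` exactly when each `χᵢ` stabilizes
`im ψᵢ` with `αᵢ(χᵢ) = δ'ᵢ χ_B δᵢ⁻¹`. Eliminating `χ_B`, the two amalgams are isomorphic iff
`δ'₁ δ'₂⁻¹ ∈ Ā₁ δ₁ δ₂⁻¹ Ā₂`, so `[(φ₁, φ₂)] ↦ Ā₁ δ₁ δ₂⁻¹ Ā₂` is well defined and injective;
it is onto since `(ψ₁ ∘ g, ψ₂)` is sent to `Ā₁ g Ā₂`.
-/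

theorem Quot.exists_bijective_of_iff {α β : Type*} {r : α → α → Prop} (f : α → β)
    (hf : ∀ a b, r a b ↔ f a = f b) (hsurj : Surjective f) : ∃ F : Quot r → β, Bijective F := by
  refine ⟨Quot.lift f fun a b => (hf a b).mp,
    fun q q' => Quot.induction_on₂ q q' fun a b h => Quot.sound ((hf a b).mpr h), fun y => ?_⟩
  obtain ⟨a, rfl⟩ := hsurj y
  exact ⟨Quot.mk r a, rfl⟩

theorem DoubleCoset.mk_mul_inv_eq_mk_mul_inv_iff {G : Type*} [Group G] (H K : Subgroup G)
    (x₁ x₂ y₁ y₂ : G) :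
    DoubleCoset.mk H K (x₁ * x₂⁻¹) = DoubleCoset.mk H K (y₁ * y₂⁻¹) ↔
      ∃ c, y₁ * c * x₁⁻¹ ∈ H ∧ y₂ * c * x₂⁻¹ ∈ K := by
  rw [DoubleCoset.eq]
  constructor
  · rintro ⟨h, hh, k, hk, hy⟩
    obtain rfl : y₁ = h * (x₁ * x₂⁻¹) * k * y₂ := mul_inv_eq_iff_eq_mul.mp hy
    exact ⟨y₂⁻¹ * k⁻¹ * x₂, by convert hh using 1; group, by convert K.inv_mem hk using 1; group⟩
  · rintro ⟨c, hh, hk⟩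
    exact ⟨y₁ * c * x₁⁻¹, hh, (y₂ * c * x₂⁻¹)⁻¹, K.inv_mem hk, by group⟩

section OneSide

variable {B P : Type} [Group B] [Group P]

theorem apply_stabToAut (ψ : B →* P) (hψ : Injective ⇑ψ) (s : stabSubgroup ψ) (x : B) :
    ψ (stabToAut ψ hψ s x) = (s : MulAut P) (ψ x) :=
  stabAutFun_spec ψ hψ s x

theorem pullbackAut_eq_iff (φ ψ : B →* P) (hφ : Injective ⇑φ) (hψ : Injective ⇑ψ)
    (h : Set.range ⇑φ = Set.range ⇑ψ) (g : MulAut B) :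
    pullbackAut φ ψ hφ hψ h = g ↔ ∀ x, φ (g x) = ψ x := by
  rw [MulEquiv.ext_iff]
  refine forall_congr' fun x => ?_
  rw [← hφ.eq_iff, pullbackAut_spec, eq_comm]

theorem image_range_eq_of_comp_eq {φ φ' : B →* P} {χ : MulAut P} {χB : MulAut B}
    (hχ : ∀ x, χ (φ x) = φ' (χB x)) : ⇑χ '' Set.range ⇑φ = Set.range ⇑φ' := by
  rw [← Set.range_comp, ← χB.surjective.range_comp ⇑φ']
  exact congrArg Set.range (funext hχ)

theorem exists_mulAut_comp_eq_iff (ψ φ φ' : B →* P) (hψ : Injective ⇑ψ)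
    (hφ : Injective ⇑φ) (hφ' : Injective ⇑φ')
    (hr : Set.range ⇑φ = Set.range ⇑ψ) (hr' : Set.range ⇑φ' = Set.range ⇑ψ) (χB : MulAut B) :
    (∃ χ : MulAut P, ∀ x, χ (φ x) = φ' (χB x)) ↔
      pullbackAut ψ φ' hψ hφ' hr'.symm * χB * (pullbackAut ψ φ hψ hφ hr.symm)⁻¹ ∈
        (stabToAut ψ hψ).range := by
  set δ := pullbackAut ψ φ hψ hφ hr.symm
  set δ' := pullbackAut ψ φ' hψ hφ' hr'.symm
  have key : ∀ s : stabSubgroup ψ,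
      stabToAut ψ hψ s = δ' * χB * δ⁻¹ ↔ ∀ x, (s : MulAut P) (φ x) = φ' (χB x) := by
    intro s
    rw [eq_mul_inv_iff_mul_eq, MulEquiv.ext_iff]
    refine forall_congr' fun x => ?_
    rw [← hψ.eq_iff, MulAut.mul_apply, MulAut.mul_apply, apply_stabToAut,
      pullbackAut_spec, pullbackAut_spec]
  constructor
  · rintro ⟨χ, hχ⟩
    have hmem : χ ∈ stabSubgroup ψ := by
      have := image_range_eq_of_comp_eq hχ
      rwa [hr, hr'] at this
    exact ⟨⟨χ, hmem⟩, (key _).mpr hχ⟩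
  · rintro ⟨s, hs⟩
    exact ⟨s, (key s).mp hs⟩

end OneSide

/-- **Goldschmidt's Lemma.** Let `A₀` be the rank-two amalgam
`P₁ ←ψ₁− B −ψ₂→ P₂` with `ψ₁, ψ₂` injective.  Amalgams of type `A₀` are pairs of
injective homomorphisms `φᵢ : B → Pᵢ` with `im φᵢ = im ψᵢ`; an isomorphism between two
such amalgams is a triple of automorphisms `χ_B ∈ Aut(B)`, `χᵢ ∈ Aut(Pᵢ)` with
`χᵢ ∘ φᵢ = φ'ᵢ ∘ χ_B`.  With `Āᵢ = im(ad ψᵢ) ≤ Aut(B)` (the image of the subgroup of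
`Aut(Pᵢ)` leaving `im ψᵢ` invariant), there is a one-to-one correspondence between
isomorphism classes of amalgams of type `A₀` and `(Ā₁, Ā₂)`-double cosets in `Aut(B)`. -/
theorem goldschmidt_lemma {B P₁ P₂ : Type} [Group B] [Group P₁] [Group P₂]
    (ψ₁ : B →* P₁) (ψ₂ : B →* P₂) (h₁ : Injective ⇑ψ₁) (h₂ : Injective ⇑ψ₂) :
    ∃ F : Quot (fun A A' :
          {p : (B →* P₁) × (B →* P₂) //
            Injective ⇑p.1 ∧ Injective ⇑p.2 ∧
            Set.range ⇑p.1 = Set.range ⇑ψ₁ ∧ Set.range ⇑p.2 = Set.range ⇑ψ₂} =>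
          ∃ (χB : MulAut B) (χ₁ : MulAut P₁) (χ₂ : MulAut P₂),
            (∀ x, χ₁ (A.1.1 x) = A'.1.1 (χB x)) ∧
            (∀ x, χ₂ (A.1.2 x) = A'.1.2 (χB x))) →
        DoubleCoset.Quotient ((stabToAut ψ₁ h₁).range : Set (MulAut B))
          ((stabToAut ψ₂ h₂).range : Set (MulAut B)),
      Function.Bijective F := by
  refine Quot.exists_bijective_of_iff
    (fun A => DoubleCoset.mk _ _ (pullbackAut ψ₁ A.1.1 h₁ A.2.1 A.2.2.2.1.symm *
      (pullbackAut ψ₂ A.1.2 h₂ A.2.2.1 A.2.2.2.2.symm)⁻¹)) (fun A A' => ?_) fun q => ?_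
  · simp only [exists_and_left, exists_and_right, DoubleCoset.mk_mul_inv_eq_mk_mul_inv_iff]
    exact exists_congr fun χB =>
      and_congr (exists_mulAut_comp_eq_iff ψ₁ _ _ h₁ A.2.1 A'.2.1 A.2.2.2.1 A'.2.2.2.1 χB)
        (exists_mulAut_comp_eq_iff ψ₂ _ _ h₂ A.2.2.1 A'.2.2.1 A.2.2.2.2 A'.2.2.2.2 χB)
  · obtain ⟨g, rfl⟩ := Quotient.mk''_surjective q
    have hinj : Injective ⇑(ψ₁.comp g.toMonoidHom) := h₁.comp g.injective
    have hr : Set.range ⇑(ψ₁.comp g.toMonoidHom) = Set.range ⇑ψ₁ :=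
      g.surjective.range_comp ⇑ψ₁
    refine ⟨⟨(ψ₁.comp g.toMonoidHom, ψ₂), hinj, h₂, hr, rfl⟩, ?_⟩
    beta_reduce
    rw [(pullbackAut_eq_iff ψ₁ (ψ₁.comp g.toMonoidHom) h₁ _ _ g).mpr fun _ => rfl,
      (pullbackAut_eq_iff ψ₂ ψ₂ h₂ _ _ 1).mpr fun _ => rfl, inv_one, mul_one]
end

section
/- Let Γ⃗ be the double loop on one vertex 0 with two geometric edges e₁, e₂, and let (C₀, Γ⃗) be the reference graph of groups of the rank-two amalgam P₁ ←ψ₁− B −ψ₂→ P₂, with Ā_i = im α_{e_i} ≤ Aut(B). Two pointings of the form ((C₀, Γ⃗), {id, δ⁽¹⁾}) and ((C₀, Γ⃗), {id, δ⁽²⁾}) (with δ⁽ᵏ⁾ ∈ Aut(B) attached to e₂) are isomorphic if and only if δ⁽¹⁾ and δ⁽²⁾ lie in the same (Ā₁, Ā₂)-double coset of Aut(B). -/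
open Function

section DoubleLoop

/-! The double loop on one vertex `0` with two geometric edges `e₁, e₂`, with the
reference graph of groups of the rank-two amalgam `P₁ ←ψ₁− B −ψ₂→ P₂`: the vertex
group is `A₀ = Aut(B)`, the edge groups are `A_{eᵢ} = {f ∈ Aut(Pᵢ) | f(im ψᵢ) = im ψᵢ}`
(i.e. `stabSubgroup ψᵢ`), and `α_{eᵢ}(f) = ψᵢ⁻¹ ∘ f ∘ ψᵢ` (i.e. `stabToAut ψᵢ`).
A pointing is a pair `(δ₁, δ₂)` of elements of `Aut(B)`. -/

variable {B P₁ P₂ : Type} [Group B] [Group P₁] [Group P₂]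
  (ψ₁ : B →* P₁) (ψ₂ : B →* P₂) (h₁ : Injective ⇑ψ₁) (h₂ : Injective ⇑ψ₂)

/-- The collection `{a₀ ∈ A₀, a₁ ∈ A_{e₁}, a₂ ∈ A_{e₂}}` induces an isomorphism
between the pointings `(δ₁, δ₂)` and `(δ₁', δ₂')` of the double-loop reference graph
of groups: `δᵢ * α_{eᵢ}(aᵢ) = a₀ * δᵢ'` for `i = 1, 2`. -/
def DLInduces (δ₁ δ₂ δ₁' δ₂' : MulAut B) (a₀ : MulAut B)
    (a₁ : stabSubgroup ψ₁) (a₂ : stabSubgroup ψ₂) : Prop :=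
  δ₁ * stabToAut ψ₁ h₁ a₁ = a₀ * δ₁' ∧ δ₂ * stabToAut ψ₂ h₂ a₂ = a₀ * δ₂'

/-- The pointings `(δ₁, δ₂)` and `(δ₁', δ₂')` of the double-loop reference graph of
groups are isomorphic. -/
def DLPointingIso (δ₁ δ₂ δ₁' δ₂' : MulAut B) : Prop :=
  ∃ a₀ a₁ a₂, DLInduces ψ₁ ψ₂ h₁ h₂ δ₁ δ₂ δ₁' δ₂' a₀ a₁ a₂

end DoubleLoop

/-! An isomorphism `(a₀, a₁, a₂)` between the pointings `(id, δ⁽¹⁾)` and `(id, δ⁽²⁾)` is pinned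
down by `a₀ ∈ Aut(B)`: the edge `e₁` forces `a₀ = α₁(a₁) ∈ Ā₁`, and the edge `e₂` says exactly
that `δ⁽¹⁾⁻¹ a₀ δ⁽²⁾ ∈ Ā₂`, i.e. `δ⁽²⁾ ∈ Ā₁ δ⁽¹⁾ Ā₂`. -/

section GroupLemmas

variable {G M : Type*} [Group G]

lemma exists_mul_map_eq_mul_iff_mem_range [Group M] (f : M →* G) (δ a₀ δ' : G) :
    (∃ a, δ * f a = a₀ * δ') ↔ δ⁻¹ * a₀ * δ' ∈ f.range := by
  simp only [MonoidHom.mem_range, mul_assoc, eq_inv_mul_iff_mul_eq]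

lemma exists_inv_mul_mul_mem_iff_mem_doubleCoset (H K : Subgroup G) (δ₁ δ₂ : G) :
    (∃ a₀ ∈ H, δ₁⁻¹ * a₀ * δ₂ ∈ K) ↔ δ₂ ∈ DoubleCoset.doubleCoset δ₁ H K := by
  rw [DoubleCoset.mem_doubleCoset]
  constructor
  · rintro ⟨a₀, ha₀, hk⟩
    exact ⟨a₀⁻¹, H.inv_mem ha₀, _, hk, by group⟩
  · rintro ⟨a, ha, k, hk, rfl⟩
    exact ⟨a⁻¹, H.inv_mem ha, by simpa [mul_assoc] using hk⟩

end GroupLemmas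

lemma dlPointingIso_iff {B P₁ P₂ : Type} [Group B] [Group P₁] [Group P₂]
    (ψ₁ : B →* P₁) (ψ₂ : B →* P₂) (h₁ : Injective ⇑ψ₁) (h₂ : Injective ⇑ψ₂)
    (δ₁ δ₂ δ₁' δ₂' : MulAut B) :
    DLPointingIso ψ₁ ψ₂ h₁ h₂ δ₁ δ₂ δ₁' δ₂' ↔
      ∃ a₀, δ₁⁻¹ * a₀ * δ₁' ∈ (stabToAut ψ₁ h₁).range ∧
        δ₂⁻¹ * a₀ * δ₂' ∈ (stabToAut ψ₂ h₂).range := by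
  simp only [DLPointingIso, DLInduces, ← exists_mul_map_eq_mul_iff_mem_range, exists_and_left,
    exists_and_right]

/-- Two pointings `(id, δ¹)` and `(id, δ²)` of the double-loop
reference graph of groups of `P₁ ←ψ₁− B −ψ₂→ P₂` are isomorphic if and only if
`δ¹` and `δ²` lie in the same `(Ā₁, Ā₂)`-double coset of `Aut(B)`, where
`Āᵢ = im(ad ψᵢ)` is the image of `stabToAut ψᵢ`. -/
theorem doubleLoop_pointingIso_iff_doubleCoset {B P₁ P₂ : Type} [Group B] [Group P₁]
    [Group P₂] (ψ₁ : B →* P₁) (ψ₂ : B →* P₂) (h₁ : Injective ⇑ψ₁) (h₂ : Injective ⇑ψ₂)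
    (δ₁ δ₂ : MulAut B) :
    DLPointingIso ψ₁ ψ₂ h₁ h₂ 1 δ₁ 1 δ₂ ↔
      ∃ a ∈ (stabToAut ψ₁ h₁).range, ∃ b ∈ (stabToAut ψ₂ h₂).range,
        δ₂ = a * δ₁ * b := by
  rw [dlPointingIso_iff]
  simp only [inv_one, one_mul, mul_one]
  rw [exists_inv_mul_mul_mem_iff_mem_doubleCoset]
  exact DoubleCoset.mem_doubleCoset
end

section
/- Let (C₀, Γ⃗) be a graph of groups over the triangle graph with vertices I = {1, 2, 3} (indices read modulo 3), vertex groups A_i, edge groups A_{i,i+1}, and edge maps α_{i,i+1} : A_{i,i+1} → A_i, α_{i+1,i} : A_{i,i+1} → A_{i+1}. Let A = A₁ × A₂ × A₃ with inclusions i_k : A_k → A and projections π_k : A → A_k, let Φ_k : A_{k,k+1} → A be x ↦ i_k(α_{k,k+1}(x)) · i_{k+1}(α_{k+1,k}(x)), set H_k = im Φ_k, and define (a₁,a₂,a₃) ∼ (a'₁,a'₂,a'₃) iff for each k = 1, 2, 3 there exists x_k ∈ H_k with a'_k = π_k(x_k⁻¹ · i_k(a_k) · x_{k-1}). Then the equivalence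 classes of ∼ on A are in bijection with the isomorphism classes of pointings of (C₀, Γ⃗); explicitly, the class of the pointing {δ_{i,i+1}, δ_{i+1,i}} corresponds to the class of (δ₁,₂⁻¹δ₁,₃, δ₂,₃⁻¹δ₂,₁, δ₃,₁⁻¹δ₃,₂), and the class of (a₁, a₂, a₃) corresponds to the class of the pointing with δ_{i,i+1} = 1 and δ_{i+1,i} = a_{i+1}. -/
open Function

/-! The triangle graph has vertex set `I = {1, 2, 3}`, realized here as `ZMod 3`
(indices read modulo 3), and geometric edges `{i, i+1}` for `i ∈ ZMod 3`.  A graph of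
groups over the triangle assigns a group `A i` to each vertex, a group `Ed i`
(`= A_{i,i+1}`) to each edge, and edge maps `αf i = α_{i,i+1} : Ed i → A i` and
`αb i = α_{i+1,i} : Ed i → A (i+1)`.

A pointing of this graph of groups is recorded as a pair of families
`(δf, δb)` where `δf i = δ_{i,i+1} ∈ A i` is attached to the directed edge `(i, i+1)`
and `δb i = δ_{i,i-1} ∈ A i` to the directed edge `(i, i-1)` (so the element attached
to the reversal of the edge `{i, i+1}` is `δ_{i+1,i} = δb (i+1)`). -/

section Triangle

variable (A : ZMod 3 → Type) [∀ i, Group (A i)]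
  (Ed : ZMod 3 → Type) [∀ i, Group (Ed i)]
  (αf : ∀ i, Ed i →* A i) (αb : ∀ i, Ed i →* A (i + 1))

/-- The collection `{a_i ∈ A_i, a_e ∈ A_{i,i+1}}` (with `a_{i,i+1} = a_{i+1,i} = ae i`)
induces an isomorphism of pointings `(δf, δb) → (δf', δb')` of the triangle graph of
groups: `δ_{i,i+1} * α_{i,i+1}(a_{i,i+1}) = a_i * δ'_{i,i+1}` and
`δ_{i+1,i} * α_{i+1,i}(a_{i+1,i}) = a_{i+1} * δ'_{i+1,i}` for all `i`. -/
def TriInduces (δf δb δf' δb' : ∀ i, A i) (av : ∀ i, A i) (ae : ∀ i, Ed i) : Prop :=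
  (∀ i, δf i * αf i (ae i) = av i * δf' i) ∧
  (∀ i, δb (i + 1) * αb i (ae i) = av (i + 1) * δb' (i + 1))

/-- The pointings `(δf, δb)` and `(δf', δb')` of the triangle graph of groups are
isomorphic. -/
def TriPointingIso (δf δb δf' δb' : ∀ i, A i) : Prop :=
  ∃ av ae, TriInduces A Ed αf αb δf δb δf' δb' av ae

/-- The map `Φ_k : A_{k,k+1} → A = A₁ × A₂ × A₃`,
`x ↦ i_k(α_{k,k+1}(x)) · i_{k+1}(α_{k+1,k}(x))`, where `i_k` is the canonical
inclusion of the `k`-th factor (`Pi.mulSingle`). -/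
def triPhi (k : ZMod 3) (x : Ed k) : ∀ i, A i :=
  Pi.mulSingle k (αf k x) * Pi.mulSingle (k + 1) (αb k x)

/-- The equivalence relation `∼` on `A = A₁ × A₂ × A₃`:
`(a₁,a₂,a₃) ∼ (a'₁,a'₂,a'₃)` iff for each `k` there is `x_k ∈ H_k = im Φ_k` with
`a'_k = π_k(x_k⁻¹ · i_k(a_k) · x_{k-1})`, where `π_k` is the `k`-th projection. -/
def TriRel (a a' : ∀ i, A i) : Prop :=
  ∃ x : ZMod 3 → ∀ i, A i,
    (∀ k, x k ∈ Set.range (triPhi A Ed αf αb k)) ∧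
    ∀ k, a' k = ((x k)⁻¹ * Pi.mulSingle k (a k) * x (k - 1)) k

end Triangle

/-! Every pointing `(δf, δb)` is isomorphic, via `a_i = δ_{i,i+1}` and `a_e = 1`, to the
normalized pointing `(1, δf⁻¹ δb)`. Between normalized pointings an isomorphism must have
`a_i = α_{i,i+1}(a_{i,i+1})`, and its remaining condition at the edge `{i, i+1}` reads
`a'_{i+1} = α_{i+1,i+2}(a_{i+1,i+2})⁻¹ a_{i+1} α_{i+1,i}(a_{i,i+1})`, which is the
`(i+1)`-component of `Φ_{i+1}(a_{i+1,i+2})⁻¹ i_{i+1}(a_{i+1}) Φ_i(a_{i,i+1})`, i.e. exactly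
the relation `∼`. -/

theorem Quot.map_bijective_of_leftInverse {α β : Type*} {r : α → α → Prop}
    {s : β → β → Prop} {f : α → β} {g : β → α} (hf : ∀ ⦃a a'⦄, r a a' → s (f a) (f a'))
    (hg : ∀ ⦃b b'⦄, s b b' → r (g b) (g b')) (hgf : LeftInverse g f)
    (hfg : ∀ b, s b (f (g b))) :
    Bijective (Quot.map f hf) := by
  refine ⟨LeftInverse.injective (g := Quot.map g hg) ?_, fun q => ?_⟩
  · exact Quot.ind fun a => congrArg (Quot.mk r) (hgf a)
  · induction q using Quot.ind with
    | mk b => exact ⟨Quot.mk r (g b), (Quot.sound (hfg b)).symm⟩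

section Triangle

variable {A : ZMod 3 → Type} [∀ i, Group (A i)]
  {Ed : ZMod 3 → Type} [∀ i, Group (Ed i)]
  {αf : ∀ i, Ed i →* A i} {αb : ∀ i, Ed i →* A (i + 1)}

theorem triPhi_inv_mul_mulSingle_mul_apply_succ (j : ZMod 3) (y : Ed (j + 1)) (z : Ed j)
    (v : A (j + 1)) :
    ((triPhi A Ed αf αb (j + 1) y)⁻¹ * Pi.mulSingle (j + 1) v * triPhi A Ed αf αb j z) (j + 1)
      = (αf (j + 1) y)⁻¹ * v * αb j z := by
  have hne : ∀ i : ZMod 3, i + 1 ≠ i := by decide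
  simp [triPhi, hne]

theorem TriRel.triPointingIso_one {a a' : ∀ i, A i} (h : TriRel A Ed αf αb a a') :
    TriPointingIso A Ed αf αb 1 a 1 a' := by
  obtain ⟨x, hx, hrel⟩ := h
  choose y hy using hx
  refine ⟨fun i => αf i (y i), y, fun i => by simp, fun i => ?_⟩
  have ha' := hrel (i + 1)
  rw [add_sub_cancel_right, ← hy (i + 1), ← hy i,
    triPhi_inv_mul_mulSingle_mul_apply_succ] at ha'
  rw [ha']
  group

theorem TriPointingIso.triRel_inv_mul {δf δb δf' δb' : ∀ i, A i}
    (h : TriPointingIso A Ed αf αb δf δb δf' δb') :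
    TriRel A Ed αf αb (δf⁻¹ * δb) (δf'⁻¹ * δb') := by
  obtain ⟨av, ae, hf, hb⟩ := h
  refine ⟨fun k => triPhi A Ed αf αb k (ae k), fun k => ⟨ae k, rfl⟩, fun k => ?_⟩
  obtain ⟨j, rfl⟩ : ∃ j, k = j + 1 := ⟨k - 1, (sub_add_cancel k 1).symm⟩
  rw [add_sub_cancel_right, triPhi_inv_mul_mulSingle_mul_apply_succ, Pi.mul_apply,
    Pi.mul_apply, Pi.inv_apply, Pi.inv_apply,
    eq_inv_mul_of_mul_eq (hf (j + 1)).symm, eq_inv_mul_of_mul_eq (hb j).symm]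
  group

theorem triPointingIso_one_inv_mul (δf δb : ∀ i, A i) :
    TriPointingIso A Ed αf αb δf δb 1 (δf⁻¹ * δb) :=
  ⟨δf, 1, fun i => by simp, fun i => by simp⟩

end Triangle

/-- The equivalence classes of `∼` on `A = A₁ × A₂ × A₃` are in
bijection with the isomorphism classes of pointings of the triangle graph of groups.
Explicitly, the class of the pointing `{δ_{i,i+1}, δ_{i+1,i}}` corresponds to the
class of `(δ₁,₂⁻¹δ₁,₃, δ₂,₃⁻¹δ₂,₁, δ₃,₁⁻¹δ₃,₂)` (i.e. `fun i => (δf i)⁻¹ * δb i`),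
and the class of `(a₁, a₂, a₃)` corresponds to the class of the pointing with
`δ_{i,i+1} = 1` and `δ_{i+1,i} = a_{i+1}` (i.e. `(1, a)`). -/
theorem triangle_classes_biject (A : ZMod 3 → Type) [∀ i, Group (A i)]
    (Ed : ZMod 3 → Type) [∀ i, Group (Ed i)]
    (αf : ∀ i, Ed i →* A i) (αb : ∀ i, Ed i →* A (i + 1)) :
    ∃ F : Quot (TriRel A Ed αf αb) →
        Quot (fun p q : (∀ i, A i) × (∀ i, A i) =>
          TriPointingIso A Ed αf αb p.1 p.2 q.1 q.2),
      Function.Bijective F ∧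
      (∀ a : ∀ i, A i, F (Quot.mk _ a) = Quot.mk _ (fun _ => 1, a)) ∧
      (∀ p : (∀ i, A i) × (∀ i, A i),
        F (Quot.mk _ (fun i => (p.1 i)⁻¹ * p.2 i)) = Quot.mk _ p) := by
  refine ⟨Quot.map (fun a => (1, a)) fun _ _ => TriRel.triPointingIso_one, ?_, fun a => rfl,
    fun p => Eq.symm <| Quot.sound <| triPointingIso_one_inv_mul p.1 p.2⟩
  exact Quot.map_bijective_of_leftInverse _ (g := fun p => p.1⁻¹ * p.2)
    (fun _ _ => TriPointingIso.triRel_inv_mul) (fun a => by simp)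
    (fun p => triPointingIso_one_inv_mul p.1 p.2)
end

section
/- Let (C₀, Γ⃗) be a graph of groups over the triangle graph with vertices I = {1, 2, 3} (indices modulo 3). Two positively normalized pointings δ and δ' (i.e. with δ_{i,i+1} = δ'_{i,i+1} = 1 for all i) are isomorphic if and only if there exist elements a_{i,i+1} = a_{i+1,i} ∈ A_{i,i+1} (for i = 1, 2, 3) such that δ'_{i+1,i} = α_{i+1,i-1}(a_{i+1,i-1})⁻¹ · δ_{i+1,i} · α_{i+1,i}(a_{i+1,i}) for all i = 1, 2, 3. -/
open Function

section Normalized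

variable {A : ZMod 3 → Type} [∀ i, Group (A i)]
  {Ed : ZMod 3 → Type} [∀ i, Group (Ed i)]
  {αf : ∀ i, Ed i →* A i} {αb : ∀ i, Ed i →* A (i + 1)}

theorem triInduces_normalized_iff {δb δb' av : ∀ i, A i} {ae : ∀ i, Ed i} :
    TriInduces A Ed αf αb (fun _ => 1) δb (fun _ => 1) δb' av ae ↔
      av = (fun i => αf i (ae i)) ∧ ∀ i,
        δb' (i + 1) = (αf (i + 1) (ae (i + 1)))⁻¹ * δb (i + 1) * αb i (ae i) := by
  simp only [TriInduces, one_mul, mul_one, funext_iff, eq_comm (a := av _)]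
  refine and_congr_right fun hav => forall_congr' fun i => ?_
  rw [mul_assoc, eq_inv_mul_iff_mul_eq, ← hav, eq_comm]

end Normalized

-- `α_{i+1,i-1} = αf (i + 1)` and `α_{i+1,i} = αb i`; `ae i` is `a_{i,i+1} = a_{i+1,i}`.
/-- Two positively normalized pointings `δ` and `δ'` of the triangle
graph of groups (i.e. with `δ_{i,i+1} = δ'_{i,i+1} = 1` for all `i`) are isomorphic if
and only if there exist elements `a_{i,i+1} = a_{i+1,i} ∈ A_{i,i+1}` (for `i = 1,2,3`)
such that `δ'_{i+1,i} = α_{i+1,i-1}(a_{i+1,i-1})⁻¹ · δ_{i+1,i} · α_{i+1,i}(a_{i+1,i})`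
for all `i` (here `α_{i+1,i-1} = α_{i+1,i+2} = αf (i+1)` and `a_{i+1,i-1} = ae (i+1)`,
`α_{i+1,i} = αb i` and `a_{i+1,i} = ae i`). -/
theorem triangle_normalized_pointingIso_iff (A : ZMod 3 → Type) [∀ i, Group (A i)]
    (Ed : ZMod 3 → Type) [∀ i, Group (Ed i)]
    (αf : ∀ i, Ed i →* A i) (αb : ∀ i, Ed i →* A (i + 1))
    (δb δb' : ∀ i, A i) :
    TriPointingIso A Ed αf αb (fun _ => 1) δb (fun _ => 1) δb' ↔
      ∃ ae : ∀ i, Ed i, ∀ i,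
        δb' (i + 1) = (αf (i + 1) (ae (i + 1)))⁻¹ * δb (i + 1) * αb i (ae i) := by
  simp only [TriPointingIso, triInduces_normalized_iff]
  exact ⟨fun ⟨_, ae, _, h⟩ => ⟨ae, h⟩, fun ⟨ae, h⟩ => ⟨_, ae, rfl, h⟩⟩
end

section
/- Let (C₀, Γ⃗) be a graph of groups over a connected graph Γ⃗ with base vertex a, and let ((C, Γ⃗), δ) be a pointing of it. The map sending a closed edge path γ = e₁⋯eₙ based at a to the element |γ_δ| = δ_{e₁}·e₁·δ_{ē₁}⁻¹δ_{e₂}⋯e_{n-1}·δ_{ē_{n-1}}⁻¹δ_{eₙ}·eₙ·δ_{ēₙ}⁻¹ of the path group π(C₀) induces a well-defined injective group homomorphism Φ : π₁(Γ, a) → π(C₀, a) from the fundamental group of the graph Γ to the fundamental group of the graph of groups C₀ at a. -/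
open Function

/-- `IsWalk d0 i L j` : the list `L` of directed edges is an edge path from `i` to `j`
in the graph encoded by `d0`. -/
def IsWalk {I E : Type} (d0 : Dir E → I) : I → List (Dir E) → I → Prop
  | i, [], j => i = j
  | i, d :: L, j => d0 d = i ∧ IsWalk d0 (d0 d.bar) L j

section PathGroup

variable {I E : Type} (d0 : Dir E → I) (Av : I → Type) [∀ i, Group (Av i)]
  (Ae : E → Type) [∀ e, Group (Ae e)]
  (α : ∀ d : Dir E, Ae d.1 →* Av (d0 d))

/-- The relators of the path group `π(C) = ((∗_{i∈I} A_i) ∗ F(E⃗)) / R`, presented on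
the generators `(Σ i, A_i) ⊕ E⃗`: the multiplication tables of the vertex groups,
`e · ē = 1`, and `e · α_ē(x) · ē = α_e(x)` for all edges `e` and `x ∈ A_e`. -/
def pathRels : Set (FreeGroup ((Σ i : I, Av i) ⊕ Dir E)) :=
  {r | (∃ (i : I) (x y : Av i),
          r = FreeGroup.of (Sum.inl ⟨i, x⟩) * FreeGroup.of (Sum.inl ⟨i, y⟩) *
              (FreeGroup.of (Sum.inl ⟨i, x * y⟩))⁻¹) ∨
       (∃ d : Dir E, r = FreeGroup.of (Sum.inr d) * FreeGroup.of (Sum.inr d.bar)) ∨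
       (∃ (d : Dir E) (x : Ae d.1),
          r = FreeGroup.of (Sum.inr d) * FreeGroup.of (Sum.inl ⟨d0 d.bar, α d.bar x⟩) *
              FreeGroup.of (Sum.inr d.bar) * (FreeGroup.of (Sum.inl ⟨d0 d, α d x⟩))⁻¹)}

/-- The image in the path group of a vertex-group element `x ∈ A_i`. -/
def vtxGen (i : I) (x : Av i) : PresentedGroup (pathRels d0 Av Ae α) :=
  PresentedGroup.of (Sum.inl ⟨i, x⟩)

/-- The image in the path group of a directed edge. -/
def edgeGen (d : Dir E) : PresentedGroup (pathRels d0 Av Ae α) :=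
  PresentedGroup.of (Sum.inr d)

/-- The element `|γ| = a₁ · e₁ · a₂ ⋯ eₙ · aₙ₊₁` of the path group determined by a path
`γ` on `C`, recorded as a leading vertex-group element `x = a₁ ∈ A_a` followed by a
list of pairs `(e_k, a_{k+1})` with `a_{k+1} ∈ A_{d1 e_k}`. -/
def pathElt (a : I) (x : Av a) (L : List ((d : Dir E) × Av (d0 d.bar))) :
    PresentedGroup (pathRels d0 Av Ae α) :=
  vtxGen d0 Av Ae α a x *
    (L.map fun p => edgeGen d0 Av Ae α p.1 * vtxGen d0 Av Ae α (d0 p.1.bar) p.2).prod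

/-- The fundamental group `π(C, a)` of the graph of groups `C` with base point `a`,
as the set of elements of the path group represented by closed paths at `a`. -/
def fundSet (a : I) : Set (PresentedGroup (pathRels d0 Av Ae α)) :=
  {g | ∃ (x : Av a) (L : List ((d : Dir E) × Av (d0 d.bar))),
    IsWalk d0 a (L.map Sigma.fst) a ∧ g = pathElt d0 Av Ae α a x L}

/-- The element `|γ_δ|` of the path group attached by the pointing `δ` to an edge path
`γ = e₁ ⋯ eₙ`:  `|γ_δ| = δ_{e₁} · e₁ · δ_{ē₁}⁻¹ · δ_{e₂} · e₂ ⋯ δ_{eₙ} · eₙ · δ_{ēₙ}⁻¹`. -/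
def loopElt (δ : ∀ d : Dir E, Av (d0 d)) (L : List (Dir E)) :
    PresentedGroup (pathRels d0 Av Ae α) :=
  (L.map fun d => vtxGen d0 Av Ae α (d0 d) (δ d) * edgeGen d0 Av Ae α d *
    vtxGen d0 Av Ae α (d0 d.bar) (δ d.bar)⁻¹).prod

/-- The fundamental group `π(C, a, δ)` of the pointing `δ` with base point `a`: the
image of `π₁(Γ, a)` under `γ ↦ |γ_δ|`. -/
def pointingFund (a : I) (δ : ∀ d : Dir E, Av (d0 d)) :
    Set (PresentedGroup (pathRels d0 Av Ae α)) :=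
  {g | ∃ L : List (Dir E), IsWalk d0 a L a ∧ g = loopElt d0 Av Ae α δ L}

end PathGroup

/-- The relators `e · ē = 1` presenting the fundamental groupoid-type group of the
graph `Γ⃗` on the generators `E⃗`. -/
def graphRels (E : Type) : Set (FreeGroup (Dir E)) :=
  {r | ∃ d : Dir E, r = FreeGroup.of d * FreeGroup.of d.bar}

/-- The element of `F(E⃗)/⟨e·ē⟩` determined by an edge path. -/
def walkElt {E : Type} (L : List (Dir E)) : PresentedGroup (graphRels E) :=
  (L.map fun d => (PresentedGroup.of d : PresentedGroup (graphRels E))).prod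

/-- The fundamental group `π₁(Γ, a)` of the graph `Γ` with base point `a`, as the set
of elements of `F(E⃗)/⟨e·ē⟩` represented by closed edge paths at `a`. -/
def pi1Graph {I E : Type} (d0 : Dir E → I) (a : I) : Set (PresentedGroup (graphRels E)) :=
  {g | ∃ L : List (Dir E), IsWalk d0 a L a ∧ g = walkElt L}


/-! ### Auxiliary development for the proof -/

lemma Dir.bar_bar {E : Type} (d : Dir E) : d.bar.bar = d := by simp [Dir.bar]

lemma relator_eq_one' {α : Type*} {rels : Set (FreeGroup α)} {r : FreeGroup α} (h : r ∈ rels) :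
    PresentedGroup.mk rels r = 1 :=
  (QuotientGroup.eq_one_iff r).mpr (Subgroup.subset_normalClosure h)

section AuxGoG

variable {I E : Type} (d0 : Dir E → I) (Av : I → Type) [∀ i, Group (Av i)]
  (Ae : E → Type) [∀ e, Group (Ae e)]
  (α : ∀ d : Dir E, Ae d.1 →* Av (d0 d))

lemma vtx_mul (i : I) (x y : Av i) :
    vtxGen d0 Av Ae α i x * vtxGen d0 Av Ae α i y = vtxGen d0 Av Ae α i (x * y) := by
  have h := relator_eq_one' (rels := pathRels d0 Av Ae α) (Or.inl ⟨i, x, y, rfl⟩)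
  simpa [vtxGen, PresentedGroup.of, map_mul, map_inv, mul_inv_eq_one] using h

lemma vtx_one (i : I) : vtxGen d0 Av Ae α i 1 = 1 := by
  have h : vtxGen d0 Av Ae α i 1 * vtxGen d0 Av Ae α i 1 = 1 * vtxGen d0 Av Ae α i 1 := by
    rw [vtx_mul, one_mul, one_mul]
  exact mul_right_cancel h

lemma vtx_inv (i : I) (x : Av i) :
    vtxGen d0 Av Ae α i x⁻¹ = (vtxGen d0 Av Ae α i x)⁻¹ := by
  refine eq_inv_of_mul_eq_one_left ?_
  rw [vtx_mul, inv_mul_cancel, vtx_one]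

lemma edge_bar (d : Dir E) :
    edgeGen d0 Av Ae α d * edgeGen d0 Av Ae α d.bar = 1 := by
  have h := relator_eq_one' (rels := pathRels d0 Av Ae α) (Or.inr (Or.inl ⟨d, rfl⟩))
  simpa [edgeGen, PresentedGroup.of, map_mul] using h

lemma graph_edge_bar {E : Type} (d : Dir E) :
    (PresentedGroup.of d : PresentedGroup (graphRels E)) * PresentedGroup.of d.bar = 1 := by
  have h := relator_eq_one' (rels := graphRels E) ⟨d, rfl⟩
  simpa [PresentedGroup.of, map_mul] using h

/-- The homomorphism `F(E⃗)/⟨e·ē⟩ → π(C₀)` sending `e ↦ δ_e · e · δ_ē⁻¹`. -/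
def liftδ (δ : ∀ d : Dir E, Av (d0 d)) :
    PresentedGroup (graphRels E) →* PresentedGroup (pathRels d0 Av Ae α) :=
  PresentedGroup.toGroup
    (f := fun d => vtxGen d0 Av Ae α (d0 d) (δ d) * edgeGen d0 Av Ae α d *
      vtxGen d0 Av Ae α (d0 d.bar) (δ d.bar)⁻¹)
    (by
      rintro r ⟨d, rfl⟩
      simp only [map_mul, FreeGroup.lift_apply_of]
      rw [Dir.bar_bar]
      simp only [mul_assoc]
      rw [← mul_assoc (vtxGen d0 Av Ae α (d0 d.bar) (δ d.bar)⁻¹),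
        vtx_mul, inv_mul_cancel, vtx_one, one_mul,
        ← mul_assoc (edgeGen d0 Av Ae α d), edge_bar, one_mul,
        vtx_mul, mul_inv_cancel, vtx_one])

/-- The retraction `π(C₀) → F(E⃗)/⟨e·ē⟩` killing the vertex groups. -/
def retr : PresentedGroup (pathRels d0 Av Ae α) →* PresentedGroup (graphRels E) :=
  PresentedGroup.toGroup
    (f := Sum.elim (fun _ => (1 : PresentedGroup (graphRels E))) (fun d => PresentedGroup.of d))
    (by
      rintro r (⟨i, x, y, rfl⟩ | ⟨d, rfl⟩ | ⟨d, x, rfl⟩) <;>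
        simp [map_mul, map_inv, graph_edge_bar])

lemma retr_liftδ (δ : ∀ d : Dir E, Av (d0 d)) (g : PresentedGroup (graphRels E)) :
    retr d0 Av Ae α (liftδ d0 Av Ae α δ g) = g := by
  have h : (retr d0 Av Ae α).comp (liftδ d0 Av Ae α δ) = MonoidHom.id _ := by
    ext d
    simp [liftδ, retr, vtxGen, edgeGen]
  simpa using congrArg (fun φ => φ g) h

lemma liftδ_walkElt (δ : ∀ d : Dir E, Av (d0 d)) (L : List (Dir E)) :
    liftδ d0 Av Ae α δ (walkElt L) = loopElt d0 Av Ae α δ L := by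
  unfold walkElt loopElt
  rw [map_list_prod, List.map_map]
  congr 1

lemma exists_pathElt (δ : ∀ d : Dir E, Av (d0 d)) :
    ∀ (L : List (Dir E)) (i j : I), IsWalk d0 i L j → ∀ x : Av i,
      ∃ (x' : Av i) (P : List ((d : Dir E) × Av (d0 d.bar))), P.map Sigma.fst = L ∧
        vtxGen d0 Av Ae α i x * loopElt d0 Av Ae α δ L = pathElt d0 Av Ae α i x' P := by
  intro L
  induction L with
  | nil =>
    intro i j _ x
    exact ⟨x, [], rfl, by simp [loopElt, pathElt]⟩
  | cons d L ih =>
    intro i j h x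
    obtain ⟨hd, hw⟩ := h
    subst hd
    obtain ⟨x', P, hP, hEq⟩ := ih (d0 d.bar) j hw (δ d.bar)⁻¹
    refine ⟨x * δ d, ⟨d, x'⟩ :: P, by simp [hP], ?_⟩
    calc vtxGen d0 Av Ae α (d0 d) x * loopElt d0 Av Ae α δ (d :: L)
        = vtxGen d0 Av Ae α (d0 d) x *
            (vtxGen d0 Av Ae α (d0 d) (δ d) * (edgeGen d0 Av Ae α d *
              (vtxGen d0 Av Ae α (d0 d.bar) (δ d.bar)⁻¹ * loopElt d0 Av Ae α δ L))) := by
          simp [loopElt, mul_assoc]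
      _ = vtxGen d0 Av Ae α (d0 d) (x * δ d) * (edgeGen d0 Av Ae α d *
            (vtxGen d0 Av Ae α (d0 d.bar) (δ d.bar)⁻¹ * loopElt d0 Av Ae α δ L)) := by
          rw [← mul_assoc, vtx_mul]
      _ = vtxGen d0 Av Ae α (d0 d) (x * δ d) * (edgeGen d0 Av Ae α d *
            pathElt d0 Av Ae α (d0 d.bar) x' P) := by rw [hEq]
      _ = pathElt d0 Av Ae α (d0 d) (x * δ d) (⟨d, x'⟩ :: P) := by
          simp [pathElt, vtxGen, mul_assoc]

lemma loopElt_mem_fundSet (δ : ∀ d : Dir E, Av (d0 d)) (a : I) (L : List (Dir E))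
    (h : IsWalk d0 a L a) : loopElt d0 Av Ae α δ L ∈ fundSet d0 Av Ae α a := by
  obtain ⟨x', P, hP, hEq⟩ := exists_pathElt d0 Av Ae α δ L a a h 1
  rw [vtx_one, one_mul] at hEq
  exact ⟨x', P, by rw [hP]; exact h, hEq⟩

end AuxGoG

/-- Let `(C₀, Γ⃗)` be a graph of groups over a connected graph with
base vertex `a`, and let `δ` be a pointing of it.  The map sending a closed edge path
`γ = e₁ ⋯ eₙ` based at `a` to
`|γ_δ| = δ_{e₁} · e₁ · δ_{ē₁}⁻¹ · δ_{e₂} ⋯ δ_{eₙ} · eₙ · δ_{ēₙ}⁻¹` in the path group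
`π(C₀)` induces a well-defined injective group homomorphism
`Φ : π₁(Γ, a) → π(C₀, a)`. -/
theorem pointing_loop_map_injective_hom
    {I E : Type} (d0 : Dir E → I) (Av : I → Type) [∀ i, Group (Av i)]
    (Ae : E → Type) [∀ e, Group (Ae e)] (α : ∀ d : Dir E, Ae d.1 →* Av (d0 d))
    (a : I) (hconn : ∀ i : I, ∃ L : List (Dir E), IsWalk d0 a L i)
    (δ : ∀ d : Dir E, Av (d0 d)) :
    ∃ F : {g : PresentedGroup (graphRels E) // g ∈ pi1Graph d0 a} →
        PresentedGroup (pathRels d0 Av Ae α),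
      -- `F` is well defined: its value on a closed edge path depends only on the
      -- class of the path in `π₁(Γ, a)`, and is `|γ_δ|`
      (∀ (L : List (Dir E)) (h : IsWalk d0 a L a),
        F ⟨walkElt L, L, h, rfl⟩ = loopElt d0 Av Ae α δ L) ∧
      -- `F` takes values in the fundamental group `π(C₀, a)`
      (∀ x, (F x : PresentedGroup (pathRels d0 Av Ae α)) ∈ fundSet d0 Av Ae α a) ∧
      -- `F` is injective
      Function.Injective F ∧
      -- `F` is a group homomorphism
      (∀ (g₁ g₂ : PresentedGroup (graphRels E)) (h₁ : g₁ ∈ pi1Graph d0 a)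
        (h₂ : g₂ ∈ pi1Graph d0 a) (h₁₂ : g₁ * g₂ ∈ pi1Graph d0 a),
        F ⟨g₁ * g₂, h₁₂⟩ = F ⟨g₁, h₁⟩ * F ⟨g₂, h₂⟩) := by
  refine ⟨fun x => liftδ d0 Av Ae α δ x.val, ?_, ?_, ?_, ?_⟩
  · intro L h
    exact liftδ_walkElt d0 Av Ae α δ L
  · rintro ⟨g, hg⟩
    obtain ⟨L, hL, rfl⟩ := hg
    show liftδ d0 Av Ae α δ (walkElt L) ∈ fundSet d0 Av Ae α a
    rw [liftδ_walkElt]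
    exact loopElt_mem_fundSet d0 Av Ae α δ a L hL
  · intro x y hxy
    apply Subtype.ext
    have := congrArg (retr d0 Av Ae α) hxy
    simpa [retr_liftδ] using this
  · intro g₁ g₂ h₁ h₂ h₁₂
    simp [map_mul]
end
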